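/- arXiv:1208.5501 — 2 statements merged into one kernel-verified Lean document; each statement's English description precedes it below -/
import Mathlib

section
/- Let $(x_n)$, $(y_n)$, $(q_n)$, $(\omega_n)$ be sequences of positive reals such that $|\sqrt{x_n} - \sqrt{y_n}| = O(q_n)$ and $\omega_n \to \infty$. Then $x_n = y_n(1 + o(1)) + O(q_n^2 \omega_n)$, i.e., there exist a sequence $(\epsilon_n)$ with $\epsilon_n \to 0$ and a constant $C > 0$ such that for all sufficiently large $n$, $|x_n - y_n(1+\epsilon_n)| \le C q_n^2 \omega_n$. -/
/-!
Write `d = √x - √y`, so that `x - y = d (2√y + d)`. By AM-GM with weight `s = √ω`,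
`2|d|√y ≤ y/s + s d²`, hence `|x - y| ≤ y/√ω + (√ω + 1) d²`. Taking for `ε` the ratio
`(x - y)/y` clipped to `[-1/√ω, 1/√ω]` absorbs the first term into `y ε`, and the rest is
`O(d² ω) = O(q² ω)`.
-/

open Filter

lemma abs_sub_le_inv_mul_add_mul_sq_sqrt_sub {x y s : ℝ} (hx : 0 ≤ x) (hy : 0 ≤ y) (hs : 0 < s) :
    |x - y| ≤ s⁻¹ * y + (s + 1) * (√x - √y) ^ 2 := by
  set d := √x - √y with hd
  have hfactor : x - y = d * (2 * √y + d) := by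
    rw [hd]
    linear_combination Real.sq_sqrt hy - Real.sq_sqrt hx
  have htriangle : |x - y| ≤ 2 * |d| * √y + d ^ 2 := by
    rw [hfactor, abs_mul]
    calc |d| * |2 * √y + d| ≤ |d| * (2 * √y + |d|) := by
          gcongr
          exact (abs_add_le _ _).trans (by rw [abs_of_nonneg (by positivity)])
      _ = 2 * |d| * √y + d ^ 2 := by rw [mul_add, ← sq_abs d]; ring
  have hamgm : 2 * |d| * √y ≤ s⁻¹ * y + s * d ^ 2 := by
    have hsq : 0 ≤ s⁻¹ * (√y - s * |d|) ^ 2 := by positivity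
    have hexpand : s⁻¹ * (√y - s * |d|) ^ 2 = s⁻¹ * y + s * d ^ 2 - 2 * |d| * √y := by
      rw [sub_sq, Real.sq_sqrt hy, mul_pow, sq_abs]
      field_simp
      ring
    linarith
  linarith

lemma abs_max_neg_min_le {t : ℝ} (ht : 0 ≤ t) (u : ℝ) : |max (-t) (min t u)| ≤ t :=
  abs_le.mpr ⟨le_max_left _ _, max_le (by linarith) (min_le_left _ _)⟩

lemma abs_sub_mul_one_add_clip_le {x y t r : ℝ} (hy : 0 < y) (ht : 0 ≤ t) (hr : 0 ≤ r)
    (h : |x - y| ≤ t * y + r) :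
    |x - y * (1 + max (-t) (min t ((x - y) / y)))| ≤ r := by
  set u := (x - y) / y
  have hxu : x - y = y * u := by rw [mul_div_cancel₀ _ hy.ne']
  have hres : x - y * (1 + max (-t) (min t u)) = y * (u - max (-t) (min t u)) := by
    linear_combination hxu
  rw [hxu, abs_mul, abs_of_pos hy] at h
  rw [hres, abs_mul, abs_of_pos hy]
  rcases le_total u (-t) with hu | hu
  · rw [abs_of_nonpos (by linarith)] at h
    rw [min_eq_right (by linarith), max_eq_left hu, abs_of_nonpos (by linarith)]
    linarith
  rcases le_total u t with hu' | hu'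
  · rw [min_eq_right hu', max_eq_right hu, sub_self, abs_zero, mul_zero]
    exact hr
  · rw [abs_of_nonneg (by linarith)] at h
    rw [min_eq_left hu', max_eq_right (by linarith), abs_of_nonneg (by linarith)]
    linarith

theorem sequence_comparison_general
    (x y q ω : ℕ → ℝ)
    (hx : ∀ n, 0 < x n) (hy : ∀ n, 0 < y n)
    (hO : ∃ C : ℝ, ∀ᶠ n in atTop, |Real.sqrt (x n) - Real.sqrt (y n)| ≤ C * q n)
    (hωinf : Tendsto ω atTop atTop) :
    ∃ ε : ℕ → ℝ, Tendsto ε atTop (nhds 0) ∧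
      ∃ C : ℝ, 0 < C ∧ ∀ᶠ n in atTop, |x n - y n * (1 + ε n)| ≤ C * (q n)^2 * ω n := by
  obtain ⟨C, hC⟩ := hO
  set t : ℕ → ℝ := fun n => (√(ω n))⁻¹
  have ht : ∀ n, 0 ≤ t n := fun n => inv_nonneg.mpr (Real.sqrt_nonneg _)
  have ht_tendsto : Tendsto t atTop (nhds 0) :=
    tendsto_inv_atTop_zero.comp (Real.tendsto_sqrt_atTop.comp hωinf)
  refine ⟨fun n => max (-t n) (min (t n) ((x n - y n) / y n)),
    squeeze_zero_norm (fun n => abs_max_neg_min_le (ht n) _) ht_tendsto,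
    2 * C ^ 2 + 1, by positivity, ?_⟩
  filter_upwards [hC, hωinf.eventually_ge_atTop 1] with n hd hω1
  refine abs_sub_mul_one_add_clip_le (hy n) (ht n) (by positivity) ?_
  have hsqrt_pos : 0 < √(ω n) := Real.sqrt_pos.mpr (by linarith)
  have hsqrt_le : √(ω n) ≤ ω n := Real.sqrt_le_self_iff.mpr (Or.inr hω1)
  have hd_sq : (√(x n) - √(y n)) ^ 2 ≤ C ^ 2 * q n ^ 2 := by
    rw [← mul_pow, ← sq_abs]
    exact pow_le_pow_left₀ (abs_nonneg _) hd 2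
  calc |x n - y n|
      ≤ t n * y n + (√(ω n) + 1) * (√(x n) - √(y n)) ^ 2 :=
        abs_sub_le_inv_mul_add_mul_sq_sqrt_sub (hx n).le (hy n).le hsqrt_pos
    _ ≤ t n * y n + (2 * C ^ 2 + 1) * q n ^ 2 * ω n := by
        have hweight : √(ω n) + 1 ≤ 2 * ω n := by linarith
        have hq_sq : 0 ≤ q n ^ 2 * ω n := by positivity
        nlinarith [mul_le_mul hd_sq hweight (by positivity) (by positivity : 0 ≤ C ^ 2 * q n ^ 2)]

/-- Lemma A.1: if `|√xₙ - √yₙ| = O(qₙ)` and `ωₙ → ∞`, then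
`xₙ = yₙ(1 + o(1)) + O(qₙ² ωₙ)`. -/
theorem sequence_comparison
    (x y q ω : ℕ → ℝ)
    (hx : ∀ n, 0 < x n) (hy : ∀ n, 0 < y n) (hq : ∀ n, 0 < q n) (hω : ∀ n, 0 < ω n)
    (hO : ∃ C : ℝ, ∀ᶠ n in atTop, |Real.sqrt (x n) - Real.sqrt (y n)| ≤ C * q n)
    (hωinf : Tendsto ω atTop atTop) :
    ∃ ε : ℕ → ℝ, Tendsto ε atTop (nhds 0) ∧
      ∃ C : ℝ, 0 < C ∧ ∀ᶠ n in atTop, |x n - y n * (1 + ε n)| ≤ C * (q n)^2 * ω n :=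
  sequence_comparison_general x y q ω hx hy hO hωinf
end

section
/- Let $A_1, A_2, B$ be positive semidefinite real symmetric $n \times n$ matrices with $B \le A_1^{-1}$ in the Loewner order (where $A_1$ is positive definite). Then $\mathrm{tr}((B^{1/2}(A_1 - A_2)B^{1/2})^2) \le \mathrm{tr}((I_n - A_2^{1/2} A_1^{-1} A_2^{1/2})^2)$. -/
open Matrix

section

open scoped ComplexOrder

/-- The old Mathlib `Matrix.PosSemidef.sqrt` (removed since), with its original definition. -/
noncomputable def Matrix.PosSemidef.sqrt {n 𝕜 : Type*} [Fintype n] [RCLike 𝕜] [DecidableEq n]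
    {A : Matrix n n 𝕜} (hA : A.PosSemidef) : Matrix n n 𝕜 :=
  hA.1.eigenvectorUnitary.1 * diagonal ((↑) ∘ (√·) ∘ hA.1.eigenvalues) *
  (star hA.1.eigenvectorUnitary : Matrix n n 𝕜)

end

/-! With `C = A₁ - A₂`, the left side is `tr((CB)²)`, and since `C A₁⁻¹ = I - A₂ A₁⁻¹` the right
side is `tr((C A₁⁻¹)²)`. For Hermitian `C` and `0 ≤ B ≤ D` the difference
`tr((CD)²) - tr((CB)²) = tr(CBC (D - B)) + tr(CDC (D - B))` is a sum of traces of products of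
positive semidefinite matrices, hence nonnegative. -/

namespace Matrix

section RCLike

open scoped ComplexOrder MatrixOrder

variable {n 𝕜 : Type*} [Fintype n] [RCLike 𝕜]

theorem PosSemidef.trace_mul_nonneg {A B : Matrix n n 𝕜} (hA : A.PosSemidef)
    (hB : B.PosSemidef) : 0 ≤ (A * B).trace := by
  classical
  obtain ⟨X, rfl⟩ := CStarAlgebra.nonneg_iff_eq_star_mul_self.mp hB.nonneg
  rw [← Matrix.mul_assoc, trace_mul_comm, ← Matrix.mul_assoc, star_eq_conjTranspose]
  exact (hA.mul_mul_conjTranspose_same X).trace_nonneg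

variable [DecidableEq n]

theorem PosSemidef.sqrt_eq_cfcSqrt {A : Matrix n n 𝕜} (hA : A.PosSemidef) :
    hA.sqrt = CFC.sqrt A := by
  rw [CFC.sqrt_eq_cfc, cfc_nnreal_eq_real _ A hA.nonneg, hA.1.cfc_eq]
  simp [IsHermitian.cfc, PosSemidef.sqrt, Function.comp_def, hA.eigenvalues_nonneg]

theorem PosSemidef.sqrt_mul_self {A : Matrix n n 𝕜} (hA : A.PosSemidef) :
    hA.sqrt * hA.sqrt = A := by
  rw [hA.sqrt_eq_cfcSqrt]
  exact CFC.sqrt_mul_sqrt_self A hA.nonneg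

theorem IsHermitian.trace_mul_sq_le {B C D : Matrix n n 𝕜} (hC : C.IsHermitian)
    (hB : B.PosSemidef) (hBD : (D - B).PosSemidef) :
    ((C * B) ^ 2).trace ≤ ((C * D) ^ 2).trace := by
  have hCBC : (C * B * C).PosSemidef := by
    simpa only [hC.eq] using hB.mul_mul_conjTranspose_same C
  have hCDC : (C * D * C).PosSemidef := by
    simpa only [hC.eq, add_sub_cancel] using (hB.add hBD).mul_mul_conjTranspose_same C
  have hdiff : ((C * D) ^ 2).trace - ((C * B) ^ 2).trace =
      (C * B * C * (D - B)).trace + (C * D * C * (D - B)).trace := by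
    have hcyc : (C * B * (C * D)).trace = (C * D * (C * B)).trace := trace_mul_comm _ _
    simp only [sq, Matrix.mul_sub, trace_sub, Matrix.mul_assoc] at hcyc ⊢
    rw [hcyc]
    abel
  rw [← sub_nonneg, hdiff]
  exact add_nonneg (hCBC.trace_mul_nonneg hBD) (hCDC.trace_mul_nonneg hBD)

end RCLike

variable {n R : Type*} [Fintype n] [DecidableEq n]

theorem trace_conj_sq [CommSemiring R] (S C : Matrix n n R) :
    ((S * C * S) ^ 2).trace = ((C * (S * S)) ^ 2).trace := by
  rw [sq, sq, Matrix.mul_assoc S C S, Matrix.mul_assoc S, trace_mul_comm]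
  simp only [Matrix.mul_assoc]

theorem trace_one_sub_mul_sq_comm [CommRing R] (X Y : Matrix n n R) :
    ((1 - X * Y) ^ 2).trace = ((1 - Y * X) ^ 2).trace := by
  have hXY : (X * Y * (X * Y)).trace = (Y * X * (Y * X)).trace := by
    rw [Matrix.mul_assoc, trace_mul_comm]
    simp only [Matrix.mul_assoc]
  simp only [sq, Matrix.sub_mul, Matrix.mul_sub, Matrix.one_mul, Matrix.mul_one, trace_sub,
    trace_mul_comm X Y, hXY]

end Matrix

/-- Second part of the trace approximation lemma: if `B ≤ A₁⁻¹` in the Loewner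
order, then `tr((B^{1/2}(A₁-A₂)B^{1/2})²) ≤ tr((I - A₂^{1/2} A₁⁻¹ A₂^{1/2})²)`. -/
theorem trace_trick_loewner
    (n : ℕ) (A₁ A₂ B : Matrix (Fin n) (Fin n) ℝ)
    (hA₁ : A₁.PosDef) (hA₂ : A₂.PosSemidef) (hB : B.PosSemidef)
    (hBA₁ : (A₁⁻¹ - B).PosSemidef) :
    ((hB.sqrt * (A₁ - A₂) * hB.sqrt) ^ 2).trace ≤
      ((1 - hA₂.sqrt * A₁⁻¹ * hA₂.sqrt) ^ 2).trace := by
  have hC : (A₁ - A₂).IsHermitian := hA₁.1.sub hA₂.1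
  have hCA₁ : (A₁ - A₂) * A₁⁻¹ = 1 - A₂ * A₁⁻¹ := by
    rw [Matrix.sub_mul, mul_nonsing_inv _ (A₁.isUnit_iff_isUnit_det.mp hA₁.isUnit)]
  rw [trace_conj_sq, hB.sqrt_mul_self, ← trace_one_sub_mul_sq_comm, ← Matrix.mul_assoc,
    hA₂.sqrt_mul_self, ← hCA₁]
  exact hC.trace_mul_sq_le hB hBA₁
end
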